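/- arXiv:2102.12072 — 7 statements merged into one kernel-verified Lean document; each statement's English description precedes it below -/
import Mathlib

section
/- Let n, k, τ be positive integers with k ≤ τ + 1, and let I be a set of indices contained in {τ+1, …, n}. Let σ be a uniformly random permutation of {1, …, n}, assigning record p_i (with arrival time i) the score σ(i). Then the expected number of indices i ∈ I such that record p_i is τ-durable for top-k (i.e., fewer than k indices j with i − τ ≤ j ≤ i − 1 satisfy σ(j) > σ(i)) equals k·|I|/(τ+1). -/
/-- In the random permutation model, the (1-based) record `i` gets score `σ ⟨i-1⟩`. -/
def score {n : ℕ} (σ : Equiv.Perm (Fin n)) (i : ℕ) : ℕ :=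
  if h : i - 1 < n then (σ ⟨i - 1, h⟩ : ℕ) else 0

/-- The number of indices `j` with `i - τ ≤ j ≤ i - 1` whose score exceeds that of `i`. -/
def numHigher {n : ℕ} (τ : ℕ) (σ : Equiv.Perm (Fin n)) (i : ℕ) : ℕ :=
  ((Finset.Icc (i - τ) (i - 1)).filter (fun j => score σ i < score σ j)).card

open Finset

/-- The rank of index `j` within the window `[i-τ, i]`. -/
def rankN {n : ℕ} (τ i : ℕ) (σ : Equiv.Perm (Fin n)) (j : ℕ) : ℕ :=
  ((Finset.Icc (i - τ) i).filter (fun m => score σ j < score σ m)).card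

lemma count_low_rank {α : Type*} [LinearOrder α] (V : Finset α) (k : ℕ)
    (hk : k ≤ V.card) :
    (V.filter (fun v => (V.filter (fun w => v < w)).card < k)).card = k := by
  classical
  rcases Nat.eq_zero_or_pos k with hk0 | hk0
  · simp [hk0]
  set c := V.card with hc
  set iso := V.orderIsoOfFin rfl with hiso
  have key : ∀ m : Fin c, (V.filter (fun w => (iso m : α) < w)).card = c - 1 - m := by
    intro m
    have himg : V.filter (fun w => (iso m : α) < w) = (Finset.Ioi m).image (fun m' => (iso m' : α)) := by
      ext w
      simp only [mem_filter, mem_image, mem_Ioi]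
      constructor
      · rintro ⟨hw, hlt⟩
        refine ⟨iso.symm ⟨w, hw⟩, ?_, by simp⟩
        have := iso.lt_iff_lt (x := m) (y := iso.symm ⟨w, hw⟩)
        simp only [OrderIso.apply_symm_apply] at this
        rw [← this]
        exact_mod_cast hlt
      · rintro ⟨m', hm', rfl⟩
        exact ⟨(iso m').2, by exact_mod_cast iso.lt_iff_lt.2 hm'⟩
    rw [himg, Finset.card_image_of_injective _ (fun a b hab => by
      have : (iso a : V) = iso b := Subtype.ext hab
      exact iso.injective this)]
    simp [Fin.card_Ioi]
  have hfilt : V.filter (fun v => (V.filter (fun w => v < w)).card < k)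
      = (Finset.univ.filter (fun m : Fin c => c - 1 - (m : ℕ) < k)).image (fun m => (iso m : α)) := by
    ext v
    simp only [mem_filter, mem_image, mem_univ, true_and]
    constructor
    · rintro ⟨hv, hlt⟩
      refine ⟨iso.symm ⟨v, hv⟩, ?_, by simp⟩
      rw [← key (iso.symm ⟨v, hv⟩)]
      simpa using hlt
    · rintro ⟨m, hm, rfl⟩
      exact ⟨(iso m).2, by rw [key m]; exact hm⟩
  rw [hfilt, Finset.card_image_of_injective _ (fun a b hab => iso.injective (Subtype.ext hab))]
  have : (Finset.univ.filter (fun m : Fin c => c - 1 - (m : ℕ) < k)) = Finset.Ici (⟨c - k, by omega⟩ : Fin c) := by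
    ext m
    simp only [mem_filter, mem_univ, true_and, mem_Ici, Fin.le_def]
    have := m.2
    omega
  rw [this, Fin.card_Ici]
  simp; omega

lemma score_injOn {n : ℕ} (σ : Equiv.Perm (Fin n)) {W : Finset ℕ}
    (hW : ∀ j ∈ W, 1 ≤ j ∧ j ≤ n) : Set.InjOn (score σ) W := by
  intro a ha b hb hab
  obtain ⟨ha1, ha2⟩ := hW a ha
  obtain ⟨hb1, hb2⟩ := hW b hb
  have h1 : a - 1 < n := by omega
  have h2 : b - 1 < n := by omega
  simp only [score, dif_pos h1, dif_pos h2] at hab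
  have := σ.injective (Fin.val_injective hab)
  have := Fin.mk.injEq (a-1) h1 (b-1) h2 ▸ this
  omega

lemma filter_comp_card {α β : Type*} [DecidableEq β] (W : Finset α) (f : α → β)
    (hf : Set.InjOn f W) (P : β → Prop) [DecidablePred P] :
    (W.filter (fun m => P (f m))).card = ((W.image f).filter P).card := by
  rw [Finset.filter_image, Finset.card_image_of_injOn (hf.mono (fun x hx => (Finset.mem_filter.1 hx).1))]

lemma window_count {n k τ : ℕ} (σ : Equiv.Perm (Fin n)) (i : ℕ)
    (hi1 : τ + 1 ≤ i) (hi2 : i ≤ n) (hkτ : k ≤ τ + 1) :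
    ((Finset.Icc (i - τ) i).filter (fun j => rankN τ i σ j < k)).card = k := by
  classical
  unfold rankN
  set W := Finset.Icc (i - τ) i with hW
  have hWmem : ∀ j ∈ W, 1 ≤ j ∧ j ≤ n := by
    intro j hj; rw [hW, mem_Icc] at hj; omega
  have hinj := score_injOn σ hWmem
  have hcardW : W.card = τ + 1 := by rw [hW, Nat.card_Icc]; omega
  have hcardV : (W.image (score σ)).card = τ + 1 := by
    rw [Finset.card_image_of_injOn hinj, hcardW]
  have hinner : ∀ j ∈ W, (W.filter (fun m => score σ j < score σ m)).card
      = ((W.image (score σ)).filter (fun w => score σ j < w)).card := by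
    intro j hj
    exact filter_comp_card W (score σ) hinj _
  have houter : (W.filter (fun j => (W.filter (fun m => score σ j < score σ m)).card < k)).card
      = (W.filter (fun j =>
          ((W.image (score σ)).filter (fun w => score σ j < w)).card < k)).card := by
    apply Finset.card_bij (fun j _ => j)
    · intro j hj
      rw [Finset.mem_filter] at hj ⊢
      exact ⟨hj.1, by rw [← hinner j hj.1]; exact hj.2⟩
    · intro a ha b hb h; exact h
    · intro j hj
      rw [Finset.mem_filter] at hj
      exact ⟨j, Finset.mem_filter.2 ⟨hj.1, by rw [hinner j hj.1]; exact hj.2⟩, rfl⟩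
  rw [houter, filter_comp_card W (score σ) hinj
      (fun v => ((W.image (score σ)).filter (fun w => v < w)).card < k)]
  exact count_low_rank _ k (by omega)

lemma score_comp_swap {n τ i : ℕ} (σ : Equiv.Perm (Fin n)) {j a : ℕ}
    (hi1 : τ + 1 ≤ i) (hi2 : i ≤ n) (hj : j ∈ Finset.Icc (i - τ) i)
    (ha1 : 1 ≤ a) (ha2 : a ≤ n) :
    score (σ * Equiv.swap (⟨j - 1, by rw [mem_Icc] at hj; omega⟩ : Fin n)
      ⟨i - 1, by omega⟩) a
    = score σ (if a = i then j else if a = j then i else a) := by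
  rw [mem_Icc] at hj
  have hja : 1 ≤ j := by omega
  have h1 : a - 1 < n := by omega
  have hb1 : 1 ≤ (if a = i then j else if a = j then i else a)
      ∧ (if a = i then j else if a = j then i else a) ≤ n := by split_ifs <;> omega
  have h2 : (if a = i then j else if a = j then i else a) - 1 < n := by omega
  have hswap : (Equiv.swap (⟨j - 1, by omega⟩ : Fin n) ⟨i - 1, by omega⟩) ⟨a - 1, h1⟩
      = ⟨(if a = i then j else if a = j then i else a) - 1, h2⟩ := by
    apply Fin.ext
    simp only [Equiv.swap_apply_def, apply_ite Fin.val, Fin.ext_iff, Fin.val_mk]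
    split_ifs <;> omega
  simp only [score, dif_pos h1, dif_pos h2, Equiv.Perm.mul_apply, hswap]

lemma rankN_mul_swap {n τ i : ℕ} (σ : Equiv.Perm (Fin n)) {j a : ℕ}
    (hi1 : τ + 1 ≤ i) (hi2 : i ≤ n) (hj : j ∈ Finset.Icc (i - τ) i)
    (ha1 : 1 ≤ a) (ha2 : a ≤ n) :
    rankN τ i (σ * Equiv.swap (⟨j - 1, by rw [mem_Icc] at hj; omega⟩ : Fin n)
      ⟨i - 1, by omega⟩) a
    = rankN τ i σ (if a = i then j else if a = j then i else a) := by
  have hj' := hj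
  rw [mem_Icc] at hj'
  unfold rankN
  set s : ℕ → ℕ := fun m => if m = i then j else if m = j then i else m with hs
  have hsmem : ∀ m ∈ Finset.Icc (i - τ) i, s m ∈ Finset.Icc (i - τ) i := by
    intro m hm; rw [mem_Icc] at hm ⊢; rw [hs]; simp only; split_ifs <;> omega
  have hss : ∀ m, s (s m) = m := by
    intro m; rw [hs]; simp only; split_ifs <;> omega
  have e1 := score_comp_swap (τ := τ) (i := i) σ hi1 hi2 hj ha1 ha2
  apply Finset.card_bij' (fun m _ => s m) (fun m _ => s m)
  · intro m hm
    rw [mem_filter] at hm ⊢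
    refine ⟨hsmem m hm.1, ?_⟩
    have hm1 : 1 ≤ m ∧ m ≤ n := by have := hm.1; rw [mem_Icc] at this; omega
    have e2 := score_comp_swap (τ := τ) (i := i) σ hi1 hi2 hj hm1.1 hm1.2
    rw [e1, e2] at hm
    exact hm.2
  · intro m hm
    rw [mem_filter] at hm ⊢
    have hmem := hsmem m hm.1
    refine ⟨hmem, ?_⟩
    have hm1 : 1 ≤ s m ∧ s m ≤ n := by rw [mem_Icc] at hmem; omega
    have e2 := score_comp_swap (τ := τ) (i := i) σ hi1 hi2 hj hm1.1 hm1.2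
    rw [e1, e2, show (if s m = i then j else if s m = j then i else s m) = m from hss m]
    exact hm.2
  · intro m _; exact hss m
  · intro m _; exact hss m

lemma sigma_count {n k τ i : ℕ} (hi1 : τ + 1 ≤ i) (hi2 : i ≤ n) (hkτ : k ≤ τ + 1) :
    (τ + 1) * (Finset.univ.filter (fun σ : Equiv.Perm (Fin n) => rankN τ i σ i < k)).card
      = k * Fintype.card (Equiv.Perm (Fin n)) := by
  classical
  set W := Finset.Icc (i - τ) i with hWdef
  have hNj : ∀ j ∈ W, (Finset.univ.filter (fun σ : Equiv.Perm (Fin n) => rankN τ i σ j < k)).card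
      = (Finset.univ.filter (fun σ : Equiv.Perm (Fin n) => rankN τ i σ i < k)).card := by
    intro j hj
    have hjj := hj
    rw [hWdef, mem_Icc] at hjj
    set g := Equiv.swap (⟨j - 1, by omega⟩ : Fin n) ⟨i - 1, by omega⟩ with hg
    have hgg : ∀ σ : Equiv.Perm (Fin n), σ * g * g = σ := by
      intro σ; rw [mul_assoc, hg, Equiv.swap_mul_self, mul_one]
    apply Finset.card_bij' (fun σ _ => σ * g) (fun σ _ => σ * g)
    · intro σ hσ
      rw [mem_filter] at hσ ⊢
      refine ⟨mem_univ _, ?_⟩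
      have := rankN_mul_swap σ hi1 hi2 hj (by omega) hi2
      simp only [if_pos rfl] at this
      rw [this]; exact hσ.2
    · intro σ hσ
      rw [mem_filter] at hσ ⊢
      refine ⟨mem_univ _, ?_⟩
      have := rankN_mul_swap σ hi1 hi2 hj (a := j) (by omega) (by omega)
      have hsj : (if j = i then j else if j = j then i else j) = i := by
        split_ifs <;> omega
      rw [hsj] at this
      rw [this]; exact hσ.2
    · intro σ _; exact hgg σ
    · intro σ _; exact hgg σ
  have hsum : ∑ j ∈ W, (Finset.univ.filter
      (fun σ : Equiv.Perm (Fin n) => rankN τ i σ j < k)).card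
      = k * Fintype.card (Equiv.Perm (Fin n)) := by
    calc ∑ j ∈ W, (Finset.univ.filter (fun σ : Equiv.Perm (Fin n) => rankN τ i σ j < k)).card
        = ∑ j ∈ W, ∑ σ : Equiv.Perm (Fin n), (if rankN τ i σ j < k then 1 else 0) := by
          simp only [Finset.card_filter]
      _ = ∑ σ : Equiv.Perm (Fin n), ∑ j ∈ W, (if rankN τ i σ j < k then 1 else 0) :=
          Finset.sum_comm
      _ = ∑ σ : Equiv.Perm (Fin n), (W.filter (fun j => rankN τ i σ j < k)).card := by
          simp only [Finset.card_filter]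
      _ = ∑ σ : Equiv.Perm (Fin n), k :=
          Finset.sum_congr rfl (fun σ _ => window_count σ i hi1 hi2 hkτ)
      _ = k * Fintype.card (Equiv.Perm (Fin n)) := by
          simp [mul_comm]
  have hWcard : W.card = τ + 1 := by rw [hWdef, Nat.card_Icc]; omega
  rw [← hsum, Finset.sum_congr rfl hNj, Finset.sum_const, hWcard, smul_eq_mul]

lemma rankN_eq_numHigher {n τ i : ℕ} (σ : Equiv.Perm (Fin n)) (hi : 1 ≤ i) :
    rankN τ i σ i = numHigher τ σ i := by
  unfold rankN numHigher
  have h : Finset.Icc (i - τ) i = insert i (Finset.Icc (i - τ) (i - 1)) := by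
    ext m; simp only [mem_Icc, mem_insert]; omega
  rw [h, filter_insert, if_neg (lt_irrefl _)]

/-- The expected number of `τ`-durable (for top-`k`) records with index in `I`
equals `k·|I|/(τ+1)`. -/
theorem expected_durable_card (n k τ : ℕ) (hn : 0 < n) (hk : 0 < k) (hτ : 0 < τ)
    (hkτ : k ≤ τ + 1) (I : Finset ℕ) (hI : I ⊆ Finset.Icc (τ + 1) n) :
    (∑ σ : Equiv.Perm (Fin n), ((I.filter (fun i => numHigher τ σ i < k)).card : ℝ))
      / (Fintype.card (Equiv.Perm (Fin n)) : ℝ)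
      = (k : ℝ) * (I.card : ℝ) / ((τ : ℝ) + 1) := by
  classical
  set c := Fintype.card (Equiv.Perm (Fin n)) with hc
  have hcpos : 0 < c := Fintype.card_pos
  have key : ∀ i ∈ I,
      (τ + 1) * (Finset.univ.filter (fun σ : Equiv.Perm (Fin n) => numHigher τ σ i < k)).card
        = k * c := by
    intro i hi
    have hmem := hI hi
    rw [mem_Icc] at hmem
    have h := sigma_count (n := n) (k := k) (i := i) hmem.1 hmem.2 hkτ
    have hfil : (Finset.univ.filter (fun σ : Equiv.Perm (Fin n) => rankN τ i σ i < k))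
        = (Finset.univ.filter (fun σ : Equiv.Perm (Fin n) => numHigher τ σ i < k)) := by
      apply Finset.filter_congr
      intro σ _
      simp [rankN_eq_numHigher σ (show 1 ≤ i by omega)]
    rw [hfil] at h
    exact h
  set S := ∑ σ : Equiv.Perm (Fin n), (I.filter (fun i => numHigher τ σ i < k)).card with hS
  have hswap : S = ∑ i ∈ I,
      (Finset.univ.filter (fun σ : Equiv.Perm (Fin n) => numHigher τ σ i < k)).card := by
    rw [hS]
    calc ∑ σ : Equiv.Perm (Fin n), (I.filter (fun i => numHigher τ σ i < k)).card
        = ∑ σ : Equiv.Perm (Fin n), ∑ i ∈ I, (if numHigher τ σ i < k then 1 else 0) := by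
          simp only [Finset.card_filter]
      _ = ∑ i ∈ I, ∑ σ : Equiv.Perm (Fin n), (if numHigher τ σ i < k then 1 else 0) :=
          Finset.sum_comm
      _ = _ := by simp only [Finset.card_filter]
  have hmain : (τ + 1) * S = I.card * (k * c) := by
    rw [hswap, Finset.mul_sum, Finset.sum_congr rfl key, Finset.sum_const, smul_eq_mul]
  have hnum : (∑ σ : Equiv.Perm (Fin n), ((I.filter (fun i => numHigher τ σ i < k)).card : ℝ))
      = (S : ℝ) := by
    rw [hS]; push_cast; rfl
  rw [hnum]
  have hmainR : ((τ : ℝ) + 1) * (S : ℝ) = (I.card : ℝ) * ((k : ℝ) * (c : ℝ)) := by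
    exact_mod_cast congrArg (Nat.cast : ℕ → ℝ) hmain
  have hcR : (c : ℝ) ≠ 0 := Nat.cast_ne_zero.2 hcpos.ne'
  have hτR : (τ : ℝ) + 1 ≠ 0 := by positivity
  field_simp
  nlinarith [hmainR]
end

section
/- Consider n points in ℝ^d whose coordinates are generated by d independent, uniformly random permutations σ_1, …, σ_d of {1, …, n}, where point p_i has j-th coordinate σ_j(i) and arrival time i. Let k, τ be positive integers and let I ⊆ {τ+1, …, n}. Let C be the (random) set of indices i ∈ I such that fewer than k points among p_{i−τ}, …, p_{i−1} dominate p_i. Then E[|C|] ≤ |I| · k · (H_{τ+1})^{d−1} / (τ+1), where H_m = Σ_{J=1}^{m} 1/J is the m-th harmonic number; in particular E[|C|] = O(k·(|I|/τ)·log^{d−1} τ). -/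
/-- In the random coordinate-permutation model, the `j`-th coordinate of the
(1-based) point `i` is `σ j ⟨i-1⟩`. -/
def coordOf {n d : ℕ} (σ : Fin d → Equiv.Perm (Fin n)) (j : Fin d) (i : ℕ) : ℕ :=
  if h : i - 1 < n then ((σ j) ⟨i - 1, h⟩ : ℕ) else 0

/-- Point `a` dominates point `b`: every coordinate of `a` is strictly larger. -/
def Dominates {n d : ℕ} (σ : Fin d → Equiv.Perm (Fin n)) (a b : ℕ) : Prop :=
  ∀ j : Fin d, coordOf σ j b < coordOf σ j a

instance {n d : ℕ} (σ : Fin d → Equiv.Perm (Fin n)) (a b : ℕ) :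
    Decidable (Dominates σ a b) :=
  inferInstanceAs (Decidable (∀ j : Fin d, coordOf σ j b < coordOf σ j a))

/-- Index `i` is `τ`-durable for the `k`-skyband: fewer than `k` of the `τ`
immediately preceding points dominate `p_i`. -/
def DurableSkyband {n d : ℕ} (k τ : ℕ) (σ : Fin d → Equiv.Perm (Fin n)) (i : ℕ) : Prop :=
  ((Finset.Icc (i - τ) (i - 1)).filter (fun a => Dominates σ a i)).card < k

instance {n d : ℕ} (k τ : ℕ) (σ : Fin d → Equiv.Perm (Fin n)) (i : ℕ) :
    Decidable (DurableSkyband k τ σ i) :=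
  inferInstanceAs
    (Decidable (((Finset.Icc (i - τ) (i - 1)).filter (fun a => Dominates σ a i)).card < k))

/-- The `m`-th harmonic number, as a real number. -/
noncomputable def harmonicR (m : ℕ) : ℝ := ∑ J ∈ Finset.Icc 1 m, (1 : ℝ) / (J : ℝ)

namespace DP
variable {n : ℕ}


def upCount (x : Fin n) (S : Finset (Fin n)) (π : Equiv.Perm (Fin n)) : ℕ :=
  (S.filter (fun a => π x < π a)).card

lemma upCount_le (x : Fin n) (S : Finset (Fin n)) (π : Equiv.Perm (Fin n)) :
    upCount x S π ≤ S.card :=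
  Finset.card_le_card (Finset.filter_subset _ _)

lemma swap_up (x : Fin n) (S : Finset (Fin n)) (hx : x ∉ S) (π : Equiv.Perm (Fin n))
    (a : Fin n) (ha : a ∈ S) (hax : π a < π x) (hmax : ∀ b ∈ S, π b < π x → π b ≤ π a) :
    upCount x S (π * Equiv.swap x a) = upCount x S π + 1 := by
  have hxa : x ≠ a := fun h => hx (h ▸ ha)
  have key : S.filter (fun b => (π * Equiv.swap x a) x < (π * Equiv.swap x a) b)
      = insert a (S.filter (fun b => π x < π b)) := by
    ext b
    simp only [Finset.mem_filter, Finset.mem_insert, Equiv.Perm.mul_apply,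
      Equiv.swap_apply_left]
    constructor
    · rintro ⟨hb, hlt⟩
      by_cases hba : b = a
      · exact Or.inl hba
      · have hbx : b ≠ x := fun h => hx (h ▸ hb)
        rw [Equiv.swap_apply_of_ne_of_ne hbx (by exact hba)] at hlt
        right
        refine ⟨hb, ?_⟩
        by_contra hnot
        have hne : π b ≠ π x := fun h => hbx (π.injective h)
        have : π b < π x := lt_of_le_of_ne (le_of_not_gt hnot) hne
        exact absurd (hmax b hb this) (not_le.mpr hlt)
    · rintro (rfl | ⟨hb, hlt⟩)
      · rw [Equiv.swap_apply_right]
        exact ⟨ha, hax⟩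
      · have hba : b ≠ a := by
          rintro rfl; exact absurd hlt (not_lt.mpr (le_of_lt hax))
        have hbx : b ≠ x := fun h => hx (h ▸ hb)
        rw [Equiv.swap_apply_of_ne_of_ne hbx hba]
        exact ⟨hb, lt_trans hax hlt⟩
  have hanotin : a ∉ S.filter (fun b => π x < π b) := by
    simp only [Finset.mem_filter, not_and, not_lt]
    exact fun _ => le_of_lt hax
  unfold upCount
  rw [key, Finset.card_insert_of_notMem hanotin]

lemma swap_down (x : Fin n) (S : Finset (Fin n)) (hx : x ∉ S) (π : Equiv.Perm (Fin n))
    (a : Fin n) (ha : a ∈ S) (hax : π x < π a) (hmin : ∀ b ∈ S, π x < π b → π a ≤ π b) :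
    upCount x S (π * Equiv.swap x a) = upCount x S π - 1 := by
  have hxa : x ≠ a := fun h => hx (h ▸ ha)
  have key : S.filter (fun b => (π * Equiv.swap x a) x < (π * Equiv.swap x a) b)
      = (S.filter (fun b => π x < π b)).erase a := by
    ext b
    simp only [Finset.mem_filter, Finset.mem_erase, Equiv.Perm.mul_apply,
      Equiv.swap_apply_left]
    constructor
    · rintro ⟨hb, hlt⟩
      by_cases hba : b = a
      · subst hba
        rw [Equiv.swap_apply_right] at hlt
        exact absurd hlt (not_lt.mpr (le_of_lt hax))
      · have hbx : b ≠ x := fun h => hx (h ▸ hb)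
        rw [Equiv.swap_apply_of_ne_of_ne hbx hba] at hlt
        exact ⟨hba, hb, lt_trans hax hlt⟩
    · rintro ⟨hba, hb, hlt⟩
      have hbx : b ≠ x := fun h => hx (h ▸ hb)
      rw [Equiv.swap_apply_of_ne_of_ne hbx hba]
      refine ⟨hb, ?_⟩
      exact lt_of_le_of_ne (hmin b hb hlt) (fun h => hba (π.injective h).symm)
  have hain : a ∈ S.filter (fun b => π x < π b) := Finset.mem_filter.mpr ⟨ha, hax⟩
  unfold upCount
  rw [key, Finset.card_erase_of_mem hain]



noncomputable def maxBelow (x : Fin n) (S : Finset (Fin n)) (π : Equiv.Perm (Fin n)) : Fin n :=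
  if h : (S.filter (fun b => π b < π x)).Nonempty
  then π.symm (((S.filter (fun b => π b < π x)).image π).max' (h.image π)) else x

noncomputable def minAbove (x : Fin n) (S : Finset (Fin n)) (π : Equiv.Perm (Fin n)) : Fin n :=
  if h : (S.filter (fun b => π x < π b)).Nonempty
  then π.symm (((S.filter (fun b => π x < π b)).image π).min' (h.image π)) else x

lemma maxBelow_spec (x : Fin n) (S : Finset (Fin n)) (π : Equiv.Perm (Fin n))
    (h : (S.filter (fun b => π b < π x)).Nonempty) :
    maxBelow x S π ∈ S.filter (fun b => π b < π x) ∧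
      ∀ b ∈ S.filter (fun b => π b < π x), π b ≤ π (maxBelow x S π) := by
  rw [maxBelow, dif_pos h]
  set A := S.filter (fun b => π b < π x)
  have hmem := (A.image π).max'_mem (h.image π)
  obtain ⟨c, hc, hcmax⟩ := Finset.mem_image.mp hmem
  rw [← hcmax]
  simp only [Equiv.symm_apply_apply]
  refine ⟨hc, fun b hb => ?_⟩
  rw [hcmax]
  exact (A.image π).le_max' _ (Finset.mem_image_of_mem π hb)

lemma minAbove_spec (x : Fin n) (S : Finset (Fin n)) (π : Equiv.Perm (Fin n))
    (h : (S.filter (fun b => π x < π b)).Nonempty) :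
    minAbove x S π ∈ S.filter (fun b => π x < π b) ∧
      ∀ b ∈ S.filter (fun b => π x < π b), π (minAbove x S π) ≤ π b := by
  rw [minAbove, dif_pos h]
  set A := S.filter (fun b => π x < π b)
  have hmem := (A.image π).min'_mem (h.image π)
  obtain ⟨c, hc, hcmax⟩ := Finset.mem_image.mp hmem
  rw [← hcmax]
  simp only [Equiv.symm_apply_apply]
  refine ⟨hc, fun b hb => ?_⟩
  rw [hcmax]
  exact (A.image π).min'_le _ (Finset.mem_image_of_mem π hb)

lemma maxBelow_eq_of (x : Fin n) (S : Finset (Fin n)) (π : Equiv.Perm (Fin n))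
    (a : Fin n) (ha : a ∈ S.filter (fun b => π b < π x))
    (hmax : ∀ b ∈ S.filter (fun b => π b < π x), π b ≤ π a) :
    maxBelow x S π = a := by
  have h : (S.filter (fun b => π b < π x)).Nonempty := ⟨a, ha⟩
  obtain ⟨hm, hsp⟩ := maxBelow_spec x S π h
  exact π.injective (le_antisymm (hmax _ hm) (hsp a ha))

lemma minAbove_eq_of (x : Fin n) (S : Finset (Fin n)) (π : Equiv.Perm (Fin n))
    (a : Fin n) (ha : a ∈ S.filter (fun b => π x < π b))
    (hmin : ∀ b ∈ S.filter (fun b => π x < π b), π a ≤ π b) :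
    minAbove x S π = a := by
  have h : (S.filter (fun b => π x < π b)).Nonempty := ⟨a, ha⟩
  obtain ⟨hm, hsp⟩ := minAbove_spec x S π h
  exact π.injective (le_antisymm (hsp a ha) (hmin _ hm))

lemma below_card (x : Fin n) (S : Finset (Fin n)) (hx : x ∉ S) (π : Equiv.Perm (Fin n)) :
    (S.filter (fun b => π b < π x)).card + upCount x S π = S.card := by
  rw [upCount]
  have : S.filter (fun b => π b < π x) = S.filter (fun b => ¬ (π x < π b)) := by
    ext b
    simp only [Finset.mem_filter, and_congr_right_iff, not_lt]
    intro hb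
    constructor
    · exact le_of_lt
    · intro hle
      refine lt_of_le_of_ne hle (fun h => hx ?_)
      rwa [π.injective h] at hb
  rw [this, add_comm]
  exact Finset.card_filter_add_card_filter_not _

lemma fiber_succ (x : Fin n) (S : Finset (Fin n)) (hx : x ∉ S) (u : ℕ) (hu : u < S.card) :
    ((Finset.univ.filter (fun π : Equiv.Perm (Fin n) => upCount x S π = u))).card =
    ((Finset.univ.filter (fun π : Equiv.Perm (Fin n) => upCount x S π = u + 1))).card := by
  refine Finset.card_bij' (fun π _ => π * Equiv.swap x (maxBelow x S π))
    (fun π _ => π * Equiv.swap x (minAbove x S π)) ?_ ?_ ?_ ?_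
  · -- maps fiber u into fiber (u+1)
    intro π hπ
    simp only [Finset.mem_filter, Finset.mem_univ, true_and] at hπ ⊢
    have hBne : (S.filter (fun b => π b < π x)).Nonempty := by
      rw [← Finset.card_pos]
      have := below_card x S hx π
      omega
    obtain ⟨hm, hsp⟩ := maxBelow_spec x S π hBne
    rw [Finset.mem_filter] at hm
    rw [← hπ]
    exact swap_up x S hx π _ hm.1 hm.2 (fun b hb hlt => hsp b (Finset.mem_filter.mpr ⟨hb, hlt⟩))
  · -- maps fiber (u+1) into fiber u
    intro π hπ
    simp only [Finset.mem_filter, Finset.mem_univ, true_and] at hπ ⊢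
    have hAne : (S.filter (fun b => π x < π b)).Nonempty := by
      rw [← Finset.card_pos, ← upCount] at *
      omega
    obtain ⟨hm, hsp⟩ := minAbove_spec x S π hAne
    rw [Finset.mem_filter] at hm
    rw [swap_down x S hx π _ hm.1 hm.2
      (fun b hb hlt => hsp b (Finset.mem_filter.mpr ⟨hb, hlt⟩)), hπ]
    omega
  · -- left inverse
    intro π hπ
    beta_reduce
    simp only [Finset.mem_filter, Finset.mem_univ, true_and] at hπ
    have hBne : (S.filter (fun b => π b < π x)).Nonempty := by
      rw [← Finset.card_pos]
      have := below_card x S hx π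
      omega
    obtain ⟨hm, hsp⟩ := maxBelow_spec x S π hBne
    rw [Finset.mem_filter] at hm
    set a := maxBelow x S π with ha
    have hax : a ≠ x := fun h => hx (h ▸ hm.1)
    set π' := π * Equiv.swap x a with hπ'
    have h1 : π' x = π a := by rw [hπ']; simp
    have h2 : π' a = π x := by rw [hπ']; simp
    have hother : ∀ b, b ≠ x → b ≠ a → π' b = π b := by
      intro b h1 h2
      rw [hπ', Equiv.Perm.mul_apply, Equiv.swap_apply_of_ne_of_ne h1 h2]
    have hmin : minAbove x S π' = a := by
      apply minAbove_eq_of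
      · rw [Finset.mem_filter, h1, h2]
        exact ⟨hm.1, hm.2⟩
      · intro b hb
        rw [Finset.mem_filter] at hb
        rcases eq_or_ne b a with rfl | hba
        · exact le_refl _
        · have hbx : b ≠ x := fun h => hx (h ▸ hb.1)
          rw [hother b hbx hba] at hb ⊢
          rw [h2]
          rcases lt_trichotomy (π b) (π x) with h | h | h
          · exact absurd (hsp b (Finset.mem_filter.mpr ⟨hb.1, h⟩))
              (not_le.mpr (h1 ▸ hb.2))
          · exact le_of_eq h.symm
          · exact le_of_lt h
    rw [hmin, hπ', mul_assoc, Equiv.swap_mul_self, mul_one]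
  · -- right inverse
    intro π hπ
    beta_reduce
    simp only [Finset.mem_filter, Finset.mem_univ, true_and] at hπ
    have hAne : (S.filter (fun b => π x < π b)).Nonempty := by
      rw [← Finset.card_pos, ← upCount] at *
      omega
    obtain ⟨hm, hsp⟩ := minAbove_spec x S π hAne
    rw [Finset.mem_filter] at hm
    set a := minAbove x S π with ha
    have hax : a ≠ x := fun h => hx (h ▸ hm.1)
    set π' := π * Equiv.swap x a with hπ'
    have h1 : π' x = π a := by rw [hπ']; simp
    have h2 : π' a = π x := by rw [hπ']; simp
    have hother : ∀ b, b ≠ x → b ≠ a → π' b = π b := by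
      intro b h1 h2
      rw [hπ', Equiv.Perm.mul_apply, Equiv.swap_apply_of_ne_of_ne h1 h2]
    have hmax : maxBelow x S π' = a := by
      apply maxBelow_eq_of
      · rw [Finset.mem_filter, h1, h2]
        exact ⟨hm.1, hm.2⟩
      · intro b hb
        rw [Finset.mem_filter] at hb
        rcases eq_or_ne b a with rfl | hba
        · exact le_refl _
        · have hbx : b ≠ x := fun h => hx (h ▸ hb.1)
          rw [hother b hbx hba] at hb ⊢
          rw [h2]
          rcases lt_trichotomy (π b) (π x) with h | h | h
          · exact le_of_lt h
          · exact le_of_eq h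
          · exact absurd (hsp b (Finset.mem_filter.mpr ⟨hb.1, h⟩))
              (not_le.mpr (h1 ▸ hb.2))
    rw [hmax, hπ', mul_assoc, Equiv.swap_mul_self, mul_one]

lemma fiber_const (x : Fin n) (S : Finset (Fin n)) (hx : x ∉ S) :
    ∀ u, u ≤ S.card →
    ((Finset.univ.filter (fun π : Equiv.Perm (Fin n) => upCount x S π = u))).card =
    ((Finset.univ.filter (fun π : Equiv.Perm (Fin n) => upCount x S π = 0))).card := by
  intro u
  induction u with
  | zero => intro _; rfl
  | succ u ih =>
    intro h
    rw [← fiber_succ x S hx u (by omega), ih (by omega)]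

lemma fiber_mul (x : Fin n) (S : Finset (Fin n)) (hx : x ∉ S) :
    (S.card + 1) *
      ((Finset.univ.filter (fun π : Equiv.Perm (Fin n) => upCount x S π = 0))).card
    = Nat.factorial n := by
  have hmaps : ∀ π : Equiv.Perm (Fin n), π ∈ Finset.univ →
      upCount x S π ∈ Finset.range (S.card + 1) := by
    intro π _
    rw [Finset.mem_range]
    exact Nat.lt_succ_of_le (upCount_le x S π)
  have h1 := Finset.sum_fiberwise_of_maps_to hmaps (fun _ => (1 : ℕ))
  simp only [Finset.sum_const, smul_eq_mul, mul_one] at h1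
  have h2 : ∀ u ∈ Finset.range (S.card + 1),
      ((Finset.univ.filter (fun π : Equiv.Perm (Fin n) => upCount x S π = u))).card =
      ((Finset.univ.filter (fun π : Equiv.Perm (Fin n) => upCount x S π = 0))).card :=
    fun u hu => fiber_const x S hx u (Nat.lt_succ_iff.mp (Finset.mem_range.mp hu))
  rw [Finset.sum_congr rfl h2, Finset.sum_const, Finset.card_range, smul_eq_mul] at h1
  rw [h1, Finset.card_univ, Fintype.card_perm, Fintype.card_fin]

lemma sum_upCount (x : Fin n) (S : Finset (Fin n)) (hx : x ∉ S) (φ : ℕ → ℝ) :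
    ((S.card : ℝ) + 1) * ∑ π : Equiv.Perm (Fin n), φ (upCount x S π)
      = (Nat.factorial n : ℝ) * ∑ u ∈ Finset.range (S.card + 1), φ u := by
  have hmaps : ∀ π : Equiv.Perm (Fin n), π ∈ Finset.univ →
      upCount x S π ∈ Finset.range (S.card + 1) := by
    intro π _
    rw [Finset.mem_range]
    exact Nat.lt_succ_of_le (upCount_le x S π)
  have h1 := Finset.sum_fiberwise_of_maps_to hmaps (fun π => φ (upCount x S π))
  rw [← h1]
  have h2 : ∀ u ∈ Finset.range (S.card + 1),
      ∑ π ∈ Finset.univ.filter (fun π : Equiv.Perm (Fin n) => upCount x S π = u),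
        φ (upCount x S π)
      = (((Finset.univ.filter (fun π : Equiv.Perm (Fin n) => upCount x S π = 0))).card : ℝ)
          * φ u := by
    intro u hu
    rw [Finset.sum_congr rfl (fun π hπ => by
      rw [(Finset.mem_filter.mp hπ).2]), Finset.sum_const,
      fiber_const x S hx u (Nat.lt_succ_iff.mp (Finset.mem_range.mp hu)),
      nsmul_eq_mul]
  rw [Finset.sum_congr rfl h2, ← Finset.mul_sum, ← mul_assoc]
  congr 1
  exact_mod_cast congrArg (Nat.cast : ℕ → ℝ) (fiber_mul x S hx)

lemma harmonicR_nonneg (m : ℕ) : 0 ≤ harmonicR m :=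
  Finset.sum_nonneg (fun J _ => by positivity)

lemma harmonicR_mono {m m' : ℕ} (h : m ≤ m') : harmonicR m ≤ harmonicR m' :=
  Finset.sum_le_sum_of_subset_of_nonneg (Finset.Icc_subset_Icc_right h)
    (fun J _ _ => by positivity)

lemma harmonicR_eq (m : ℕ) :
    ∑ u ∈ Finset.range m, (1:ℝ)/((u:ℝ)+1) = harmonicR m := by
  induction m with
  | zero => simp [harmonicR]
  | succ m ih =>
    rw [Finset.sum_range_succ, ih, harmonicR, harmonicR,
      Finset.sum_Icc_succ_top (by omega : 1 ≤ m + 1)]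
    push_cast
    ring

lemma peel (x : Fin n) (W : Finset (Fin n)) (e : ℕ) (f : ℕ → ℝ) :
    ∑ σ : Fin (e+1) → Equiv.Perm (Fin n),
      f ((W.filter (fun a => ∀ j, σ j x < σ j a)).card)
    = ∑ σ' : Fin e → Equiv.Perm (Fin n), ∑ π : Equiv.Perm (Fin n),
        f (upCount x (W.filter (fun a => ∀ j, σ' j x < σ' j a)) π) := by
  rw [← Equiv.sum_comp (Fin.consEquiv (fun _ : Fin (e+1) => Equiv.Perm (Fin n)))
    (fun σ => f ((W.filter (fun a => ∀ j, σ j x < σ j a)).card)),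
    Fintype.sum_prod_type, Finset.sum_comm]
  apply Finset.sum_congr rfl
  intro σ' _
  apply Finset.sum_congr rfl
  intro π _
  congr 1
  rw [upCount, Finset.filter_filter]
  apply congrArg
  apply Finset.filter_congr
  intro a _
  simp only [Fin.consEquiv_apply]
  constructor
  · intro h
    have h0 := h 0
    have hs := fun j : Fin e => h j.succ
    simp only [Fin.consEquiv_apply, Fin.cons_zero, Fin.cons_succ] at h0 hs
    exact ⟨fun j => hs j, h0⟩
  · rintro ⟨hs, h0⟩ j
    rcases Fin.eq_zero_or_eq_succ j with rfl | ⟨j', rfl⟩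
    · simpa using h0
    · simpa using hs j'

lemma claimB (x : Fin n) (W : Finset (Fin n)) (hx : x ∉ W) (e : ℕ) :
    ∑ σ : Fin e → Equiv.Perm (Fin n),
      (1:ℝ) / (((W.filter (fun a => ∀ j, σ j x < σ j a)).card : ℝ) + 1)
    ≤ (Nat.factorial n : ℝ)^e * harmonicR (W.card + 1) ^ e / ((W.card : ℝ) + 1) := by
  induction e with
  | zero =>
    rw [Fintype.sum_unique, Finset.filter_true_of_mem (fun a _ => fun j => j.elim0)]
    simp
  | succ e ih =>
    rw [peel x W e (fun t => (1:ℝ)/((t:ℝ)+1))]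
    have step : ∀ σ' : Fin e → Equiv.Perm (Fin n),
        ∑ π : Equiv.Perm (Fin n),
          (1:ℝ) / ((upCount x (W.filter (fun a => ∀ j, σ' j x < σ' j a)) π : ℝ) + 1)
        ≤ (Nat.factorial n : ℝ) * harmonicR (W.card + 1) *
            ((1:ℝ) / (((W.filter (fun a => ∀ j, σ' j x < σ' j a)).card : ℝ) + 1)) := by
      intro σ'
      set S := W.filter (fun a => ∀ j, σ' j x < σ' j a) with hS
      have hxS : x ∉ S := fun h => hx (Finset.mem_filter.mp h).1
      have hsum := sum_upCount x S hxS (fun u => (1:ℝ)/((u:ℝ)+1))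
      have hpos : (0:ℝ) < (S.card : ℝ) + 1 := by positivity
      have heq : ∑ π : Equiv.Perm (Fin n), (1:ℝ) / ((upCount x S π : ℝ) + 1)
          = (Nat.factorial n : ℝ) * harmonicR (S.card + 1) / ((S.card : ℝ) + 1) := by
        rw [harmonicR_eq] at hsum
        rw [eq_div_iff (ne_of_gt hpos)]
        linear_combination hsum
      rw [heq]
      have hHle : harmonicR (S.card + 1) ≤ harmonicR (W.card + 1) := by
        apply harmonicR_mono
        have : S.card ≤ W.card := Finset.card_le_card (Finset.filter_subset _ _)
        omega
      rw [div_eq_mul_one_div]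
      apply mul_le_mul_of_nonneg_right _ (by positivity)
      exact mul_le_mul_of_nonneg_left hHle (by positivity)
    calc ∑ σ' : Fin e → Equiv.Perm (Fin n), ∑ π : Equiv.Perm (Fin n),
          (1:ℝ) / ((upCount x (W.filter (fun a => ∀ j, σ' j x < σ' j a)) π : ℝ) + 1)
        ≤ ∑ σ' : Fin e → Equiv.Perm (Fin n),
            (Nat.factorial n : ℝ) * harmonicR (W.card + 1) *
              ((1:ℝ) / (((W.filter (fun a => ∀ j, σ' j x < σ' j a)).card : ℝ) + 1)) :=
          Finset.sum_le_sum (fun σ' _ => step σ')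
      _ = (Nat.factorial n : ℝ) * harmonicR (W.card + 1) *
            ∑ σ' : Fin e → Equiv.Perm (Fin n),
              (1:ℝ) / (((W.filter (fun a => ∀ j, σ' j x < σ' j a)).card : ℝ) + 1) := by
          rw [← Finset.mul_sum]
      _ ≤ (Nat.factorial n : ℝ) * harmonicR (W.card + 1) *
            ((Nat.factorial n : ℝ)^e * harmonicR (W.card + 1) ^ e / ((W.card : ℝ) + 1)) := by
          apply mul_le_mul_of_nonneg_left ih
          have := harmonicR_nonneg (W.card + 1)
          positivity
      _ = (Nat.factorial n : ℝ)^(e+1) * harmonicR (W.card + 1) ^ (e+1) / ((W.card : ℝ) + 1) := by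
          rw [pow_succ, pow_succ]
          ring

lemma main_count (k : ℕ) (x : Fin n) (W : Finset (Fin n)) (hx : x ∉ W) (e : ℕ) :
    ∑ σ : Fin (e+1) → Equiv.Perm (Fin n),
      (if (W.filter (fun a => ∀ j, σ j x < σ j a)).card < k then (1:ℝ) else 0)
    ≤ (Nat.factorial n : ℝ)^(e+1) * k * harmonicR (W.card + 1) ^ e / ((W.card : ℝ) + 1) := by
  rw [peel x W e (fun t => if t < k then (1:ℝ) else 0)]
  have step : ∀ σ' : Fin e → Equiv.Perm (Fin n),
      ∑ π : Equiv.Perm (Fin n),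
        (if upCount x (W.filter (fun a => ∀ j, σ' j x < σ' j a)) π < k then (1:ℝ) else 0)
      ≤ (Nat.factorial n : ℝ) * k *
          ((1:ℝ) / (((W.filter (fun a => ∀ j, σ' j x < σ' j a)).card : ℝ) + 1)) := by
    intro σ'
    set S := W.filter (fun a => ∀ j, σ' j x < σ' j a) with hS
    have hxS : x ∉ S := fun h => hx (Finset.mem_filter.mp h).1
    have hsum := sum_upCount x S hxS (fun u => if u < k then (1:ℝ) else 0)
    have hpos : (0:ℝ) < (S.card : ℝ) + 1 := by positivity
    have hcard : ∑ u ∈ Finset.range (S.card + 1), (if u < k then (1:ℝ) else 0) ≤ k := by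
      rw [Finset.sum_boole]
      have hsub : (Finset.range (S.card + 1)).filter (fun u => u < k) ⊆ Finset.range k := by
        intro u hu
        rw [Finset.mem_range]
        exact (Finset.mem_filter.mp hu).2
      calc ((((Finset.range (S.card + 1)).filter (fun u => u < k)).card : ℝ))
          ≤ ((Finset.range k).card : ℝ) := by
            exact_mod_cast Finset.card_le_card hsub
        _ = k := by rw [Finset.card_range]
    have hle : ((S.card : ℝ) + 1) * ∑ π : Equiv.Perm (Fin n),
        (if upCount x S π < k then (1:ℝ) else 0)
        ≤ (Nat.factorial n : ℝ) * k := by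
      rw [hsum]
      exact mul_le_mul_of_nonneg_left hcard (by positivity)
    rw [mul_assoc, mul_one_div, ← mul_div_assoc, le_div_iff₀ hpos, mul_comm]
    exact hle
  calc ∑ σ' : Fin e → Equiv.Perm (Fin n), ∑ π : Equiv.Perm (Fin n),
        (if upCount x (W.filter (fun a => ∀ j, σ' j x < σ' j a)) π < k then (1:ℝ) else 0)
      ≤ ∑ σ' : Fin e → Equiv.Perm (Fin n),
          (Nat.factorial n : ℝ) * k *
            ((1:ℝ) / (((W.filter (fun a => ∀ j, σ' j x < σ' j a)).card : ℝ) + 1)) :=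
        Finset.sum_le_sum (fun σ' _ => step σ')
    _ = (Nat.factorial n : ℝ) * k *
          ∑ σ' : Fin e → Equiv.Perm (Fin n),
            (1:ℝ) / (((W.filter (fun a => ∀ j, σ' j x < σ' j a)).card : ℝ) + 1) := by
        rw [← Finset.mul_sum]
    _ ≤ (Nat.factorial n : ℝ) * k *
          ((Nat.factorial n : ℝ)^e * harmonicR (W.card + 1) ^ e / ((W.card : ℝ) + 1)) := by
        apply mul_le_mul_of_nonneg_left (claimB x W hx e)
        positivity
    _ = (Nat.factorial n : ℝ)^(e+1) * k * harmonicR (W.card + 1) ^ e / ((W.card : ℝ) + 1) := by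
        rw [pow_succ]
        ring

end DP

open DP in
/-- The expected number of `τ`-durable-for-`k`-skyband indices in `I` is at most
`|I| · k · (H_{τ+1})^{d-1} / (τ + 1)`. -/
theorem expected_durable_skyband_card (n d k τ : ℕ)
    (hn : 0 < n) (hd : 0 < d) (hk : 0 < k) (hτ : 0 < τ)
    (I : Finset ℕ) (hI : I ⊆ Finset.Icc (τ + 1) n) :
    (∑ σ : Fin d → Equiv.Perm (Fin n),
        ((I.filter (fun i => DurableSkyband k τ σ i)).card : ℝ))
      / (Fintype.card (Fin d → Equiv.Perm (Fin n)) : ℝ)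
    ≤ (I.card : ℝ) * (k : ℝ) * (harmonicR (τ + 1)) ^ (d - 1) / ((τ : ℝ) + 1) := by
  obtain ⟨e, rfl⟩ : ∃ e, d = e + 1 := ⟨d - 1, by omega⟩
  simp only [Nat.add_sub_cancel]
  have hN : (Fintype.card (Fin (e+1) → Equiv.Perm (Fin n)) : ℝ)
      = ((Nat.factorial n : ℝ))^(e+1) := by
    rw [Fintype.card_fun, Fintype.card_perm, Fintype.card_fin, Fintype.card_fin]
    push_cast
    ring
  have hNpos : (0:ℝ) < ((Nat.factorial n : ℝ))^(e+1) := by positivity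
  have key : ∀ i ∈ I,
      ∑ σ : Fin (e+1) → Equiv.Perm (Fin n), (if DurableSkyband k τ σ i then (1:ℝ) else 0)
      ≤ (Nat.factorial n : ℝ)^(e+1) * k * harmonicR (τ+1) ^ e / ((τ:ℝ)+1) := by
    intro i hiI
    obtain ⟨hi1, hi2⟩ := Finset.mem_Icc.mp (hI hiI)
    have hx : i - 1 < n := by omega
    set x : Fin n := ⟨i-1, hx⟩ with hxdef
    set W : Finset (Fin n) :=
      Finset.univ.filter (fun b : Fin n => i - τ ≤ (b:ℕ)+1 ∧ (b:ℕ)+1 ≤ i-1) with hWdef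
    have hxW : x ∉ W := by
      simp only [hWdef, Finset.mem_filter, Finset.mem_univ, true_and, not_and, not_le, hxdef]
      intro _
      omega
    have hWcard : W.card = τ := by
      have h1 : W.card = (Finset.Icc (i-τ) (i-1)).card := by
        refine Finset.card_bij (fun b _ => (b:ℕ)+1) ?_ ?_ ?_
        · intro b hb
          simp only [hWdef, Finset.mem_filter] at hb
          exact Finset.mem_Icc.mpr ⟨hb.2.1, hb.2.2⟩
        · intro b hb b' hb' h
          beta_reduce at h
          exact Fin.ext (by omega)
        · intro a ha
          rw [Finset.mem_Icc] at ha
          have han : a - 1 < n := by omega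
          refine ⟨⟨a-1, han⟩, ?_, by simp; omega⟩
          simp only [hWdef, Finset.mem_filter, Finset.mem_univ, true_and]
          omega
      rw [h1, Nat.card_Icc]
      omega
    have hfilter : ∀ σ : Fin (e+1) → Equiv.Perm (Fin n),
        ((Finset.Icc (i-τ) (i-1)).filter (fun a => Dominates σ a i)).card
        = (W.filter (fun a => ∀ j, σ j x < σ j a)).card := by
      intro σ
      refine Finset.card_bij (fun a ha => (⟨a - 1, by
        have := Finset.mem_Icc.mp (Finset.mem_filter.mp ha).1
        omega⟩ : Fin n)) ?_ ?_ ?_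
      · intro a ha
        obtain ⟨haI, haD⟩ := Finset.mem_filter.mp ha
        rw [Finset.mem_Icc] at haI
        rw [Finset.mem_filter]
        constructor
        · simp only [hWdef, Finset.mem_filter, Finset.mem_univ, true_and]
          omega
        · intro j
          have hdom := haD j
          rw [Dominates] at haD
          unfold coordOf at hdom
          rw [dif_pos hx, dif_pos (by omega : a - 1 < n)] at hdom
          rw [Fin.lt_def]
          exact hdom
      · intro a ha a' ha' h
        have h1 := Finset.mem_Icc.mp (Finset.mem_filter.mp ha).1
        have h2 := Finset.mem_Icc.mp (Finset.mem_filter.mp ha').1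
        beta_reduce at h
        simp only [Fin.mk.injEq] at h
        omega
      · intro b hb
        obtain ⟨hbW, hbdom⟩ := Finset.mem_filter.mp hb
        simp only [hWdef, Finset.mem_filter, Finset.mem_univ, true_and] at hbW
        refine ⟨(b:ℕ)+1, ?_, ?_⟩
        · rw [Finset.mem_filter, Finset.mem_Icc]
          refine ⟨⟨hbW.1, hbW.2⟩, ?_⟩
          intro j
          have := hbdom j
          rw [Fin.lt_def] at this
          unfold coordOf
          rw [dif_pos (by omega : (b:ℕ)+1-1 < n), dif_pos hx]
          simpa using this
        · apply Fin.ext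
          simp
    have hrw : ∀ σ : Fin (e+1) → Equiv.Perm (Fin n),
        (if DurableSkyband k τ σ i then (1:ℝ) else 0)
        = (if (W.filter (fun a => ∀ j, σ j x < σ j a)).card < k then (1:ℝ) else 0) := by
      intro σ
      simp only [DurableSkyband, hfilter σ]
    rw [Finset.sum_congr rfl (fun σ _ => hrw σ)]
    have hmc := main_count k x W hxW e
    rw [hWcard] at hmc
    exact_mod_cast hmc
  have hswap : ∑ σ : Fin (e+1) → Equiv.Perm (Fin n),
      ((I.filter (fun i => DurableSkyband k τ σ i)).card : ℝ)
      = ∑ i ∈ I, ∑ σ : Fin (e+1) → Equiv.Perm (Fin n),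
          (if DurableSkyband k τ σ i then (1:ℝ) else 0) := by
    rw [← Finset.sum_comm]
    apply Finset.sum_congr rfl
    intro σ _
    rw [Finset.sum_boole]
  rw [hswap, hN, div_le_iff₀ hNpos]
  calc ∑ i ∈ I, ∑ σ : Fin (e+1) → Equiv.Perm (Fin n),
        (if DurableSkyband k τ σ i then (1:ℝ) else 0)
      ≤ ∑ _i ∈ I, (Nat.factorial n : ℝ)^(e+1) * k * harmonicR (τ+1) ^ e / ((τ:ℝ)+1) :=
        Finset.sum_le_sum key
    _ = (I.card : ℝ) * ((Nat.factorial n : ℝ)^(e+1) * k * harmonicR (τ+1) ^ e / ((τ:ℝ)+1)) := by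
        rw [Finset.sum_const, nsmul_eq_mul]
    _ = (I.card : ℝ) * (k : ℝ) * harmonicR (τ+1) ^ e / ((τ:ℝ)+1) * (Nat.factorial n : ℝ)^(e+1) := by
        ring
end

section
/- For positive integers m, d, k, let A(m, d) denote the expected size of the k-skyband of m points in ℝ^d whose coordinates are generated by d independent, uniformly random permutations of {1, …, m}. Then for every d ≥ 2 and every m ≥ 1, A(m, d) = Σ_{g=1}^{m} A(g, d−1)/g. -/
/-- The size of the `k`-skyband of the `m` points determined by `σ`:
the number of points dominated by fewer than `k` other points. -/
def skybandSize {m d : ℕ} (k : ℕ) (σ : Fin d → Equiv.Perm (Fin m)) : ℕ :=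
  ((Finset.Icc 1 m).filter (fun i =>
    ((Finset.Icc 1 m).filter (fun a => Dominates σ a i)).card < k)).card

/-- `A k m d`: the expected size of the `k`-skyband of `m` points in `ℝ^d` whose
coordinates are generated by `d` independent uniformly random permutations of
`{1, …, m}`. -/
noncomputable def A (k m d : ℕ) : ℝ :=
  (∑ σ : Fin d → Equiv.Perm (Fin m), (skybandSize k σ : ℝ))
    / (Fintype.card (Fin d → Equiv.Perm (Fin m)) : ℝ)

/-!
By relabelling the points, `A(m, d)` is `m` times the probability that a fixed point `x` lies in
the `k`-skyband. Condition on the first permutation `s`: only the points `y` with `s x < s y` can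
dominate `x`, and together with `x` they form a set `U` of `m - s x` points. In the remaining
`d - 1` coordinates only the relative order (the pattern) of `U` matters, and the pattern of a
uniform permutation on `U` is uniform, because the pattern map is equivariant under relabelling
`U`. So the conditional probability is `A(m - s x, d - 1) / (m - s x)`, and `s x` is uniform on
`{0, …, m - 1}`.
-/

open Finset Equiv
open scoped Nat

namespace Skyband

lemma Icc_one_eq_map (m : ℕ) :
    Icc 1 m = univ.map ((Fin.valEmbedding (n := m)).trans (addRightEmbedding 1)) := by
  ext i
  simp only [mem_Icc, mem_map, mem_univ, true_and, Function.Embedding.trans_apply,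
    Fin.valEmbedding_apply, addRightEmbedding_apply, Fin.exists_iff]
  exact ⟨fun h => ⟨i - 1, by omega, by omega⟩, fun ⟨x, hx, h⟩ => by omega⟩

lemma sum_fin_sub_eq_sum_Icc {M : Type*} [AddCommMonoid M] (f : ℕ → M) (m : ℕ) :
    ∑ v : Fin m, f (m - v) = ∑ g ∈ Icc 1 m, f g := by
  rw [Icc_one_eq_map, sum_map, ← Equiv.sum_comp Fin.revPerm]
  refine sum_congr rfl fun v _ => congrArg f ?_
  simp only [Fin.revPerm_apply, Fin.val_rev, Function.Embedding.trans_apply,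
    Fin.valEmbedding_apply, addRightEmbedding_apply]
  omega

lemma card_mul_card_filter_comp {X G : Type*} [Group X] [Group G] [Fintype X] [Fintype G]
    (ψ : G → X) (f : X → G) (hf : ∀ x c, f (x * ψ c) = f x * c) (Q : G → Prop)
    [DecidablePred Q] :
    Fintype.card G * #{x | Q (f x)} = Fintype.card X * #{c | Q c} := by
  simp only [card_filter]
  calc Fintype.card G * ∑ x, (if Q (f x) then 1 else 0)
      = ∑ c : G, ∑ x, (if Q (f (x * ψ c)) then 1 else 0) := by
        rw [← smul_eq_mul, ← card_univ, ← sum_const]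
        exact sum_congr rfl fun c _ =>
          (Equiv.sum_comp (Equiv.mulRight (ψ c)) fun x => if Q (f x) then 1 else 0).symm
    _ = ∑ x : X, ∑ c, (if Q (f x * c) then 1 else 0) := by simp only [hf]; exact sum_comm
    _ = Fintype.card X * ∑ c, (if Q c then 1 else 0) := by
        rw [← smul_eq_mul, ← card_univ, ← sum_const]
        exact sum_congr rfl fun x _ =>
          Equiv.sum_comp (Equiv.mulLeft (f x)) fun c => if Q c then 1 else 0

lemma card_smul_sum_perm_apply {α M : Type*} [Fintype α] [DecidableEq α] [AddCommMonoid M]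
    (w : α → M) (a : α) :
    Fintype.card α • ∑ s : Perm α, w (s a) = (Fintype.card α)! • ∑ v, w v := by
  calc Fintype.card α • ∑ s : Perm α, w (s a)
      = ∑ x : α, ∑ s : Perm α, w (s x) := by
        rw [← card_univ, ← sum_const]
        refine sum_congr rfl fun x _ => ?_
        rw [← Equiv.sum_comp (Equiv.mulRight (swap a x))]
        simp
    _ = (Fintype.card α)! • ∑ v, w v := by
        rw [sum_comm, ← Fintype.card_perm, ← card_univ, ← sum_const]
        exact sum_congr rfl fun s _ => Equiv.sum_comp s w

section Pattern

variable {g : ℕ} {α : Type*} [LinearOrder α] {f : Fin g → α}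

-- For injective `f`, `pattern f a` is the rank of `f a` among the values of `f`.
def pattern (f : Fin g → α) : Perm (Fin g) := (Tuple.sort f)⁻¹

lemma pattern_lt_pattern_iff (hf : Function.Injective f) (a b : Fin g) :
    pattern f a < pattern f b ↔ f a < f b := by
  have hmono : StrictMono (f ∘ Tuple.sort f) :=
    (Tuple.monotone_sort f).strictMono_of_injective (hf.comp (Tuple.sort f).injective)
  conv_rhs => rw [← (Tuple.sort f).apply_symm_apply a, ← (Tuple.sort f).apply_symm_apply b]
  exact hmono.lt_iff_lt.symm

lemma pattern_comp_perm (hf : Function.Injective f) (ρ : Perm (Fin g)) :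
    pattern (f ∘ ρ) = pattern f * ρ := by
  have hsort : ρ⁻¹ * Tuple.sort f = Tuple.sort (f ∘ ρ) := by
    refine Tuple.eq_sort_iff.2 ⟨?_, fun i j hij hfij => absurd (hf.comp ρ.injective hfij) ?_⟩
    · convert Tuple.monotone_sort f using 1
      ext i
      simp
    · simpa using hij.ne
  simp [pattern, ← hsort]

end Pattern

variable {n : ℕ} {ι : Type*} [Fintype ι]

def domCountIn (U : Finset (Fin n)) (τ : ι → Perm (Fin n)) (x : Fin n) : ℕ :=
  #{y ∈ U | ∀ j, τ j x < τ j y}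

def domCount (τ : ι → Perm (Fin n)) (x : Fin n) : ℕ :=
  domCountIn univ τ x

lemma coordOf_val_add_one {d : ℕ} (σ : Fin d → Perm (Fin n)) (j : Fin d) (x : Fin n) :
    coordOf σ j (x + 1) = σ j x := by
  simp [coordOf]

lemma dominates_val_add_one {m d : ℕ} (σ : Fin d → Perm (Fin m)) (a b : Fin m) :
    Dominates σ (a + 1) (b + 1) ↔ ∀ j, σ j b < σ j a := by
  simp [Dominates, coordOf_val_add_one]

lemma card_dominators_eq_domCount {m d : ℕ} (σ : Fin d → Perm (Fin m)) (x : Fin m) :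
    #{a ∈ Icc 1 m | Dominates σ a (x + 1)} = domCount σ x := by
  rw [Icc_one_eq_map, filter_map, card_map, domCount, domCountIn]
  congr 1
  ext a
  simp [dominates_val_add_one]

lemma skybandSize_eq_card {m d : ℕ} (k : ℕ) (σ : Fin d → Perm (Fin m)) :
    skybandSize k σ = #{x | domCount σ x < k} := by
  rw [skybandSize, Icc_one_eq_map, filter_map, card_map]
  congr 1
  ext x
  simp [← card_dominators_eq_domCount, Icc_one_eq_map]

def skybandCount (k : ℕ) (ι : Type*) [Fintype ι] [DecidableEq ι] (x : Fin n) : ℕ :=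
  #{τ : ι → Perm (Fin n) | domCount τ x < k}

lemma domCount_mul_const (τ : ι → Perm (Fin n)) (π : Perm (Fin n)) (x : Fin n) :
    domCount (τ * fun _ => π) x = domCount τ (π x) := by
  rw [domCount, domCount, domCountIn, domCountIn]
  refine card_equiv π fun y => ?_
  rw [mem_filter, mem_filter]
  simp

lemma skybandCount_apply [DecidableEq ι] (k : ℕ) (π : Perm (Fin n)) (x : Fin n) :
    skybandCount k ι (π x) = skybandCount k ι x :=
  card_equiv (Equiv.mulRight fun _ => π) (by simp [domCount_mul_const])

lemma skybandCount_eq [DecidableEq ι] (k : ℕ) (x y : Fin n) :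
    skybandCount k ι x = skybandCount k ι y := by
  rw [← skybandCount_apply k (swap x y) x, swap_apply_left]

lemma A_eq_mul_skybandCount {m d : ℕ} (k : ℕ) (x : Fin m) :
    A k m d = m * skybandCount k (Fin d) x / (m ! : ℝ) ^ d := by
  have hsum : ∑ σ : Fin d → Perm (Fin m), skybandSize k σ = m * skybandCount k (Fin d) x := by
    simp only [skybandSize_eq_card, card_filter]
    rw [sum_comm]
    simp only [← card_filter]
    change ∑ y, skybandCount k (Fin d) y = _
    simp [skybandCount_eq k _ x]
  rw [A, ← Nat.cast_sum, hsum, Fintype.card_fun, Fintype.card_perm]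
  simp

lemma card_mul_card_filter_pattern [DecidableEq ι] {g : ℕ} (S : Fin g ↪ Fin n)
    (Q : (ι → Perm (Fin g)) → Prop) [DecidablePred Q] :
    g ! ^ Fintype.card ι * #{τ : ι → Perm (Fin n) | Q fun j => pattern (τ j ∘ S)}
      = n ! ^ Fintype.card ι * #{π | Q π} := by
  have hequiv (τ : Perm (Fin n)) (ρ : Perm (Fin g)) :
      pattern ((τ * ρ.viaEmbedding S) ∘ S) = pattern (τ ∘ S) * ρ := by
    rw [← pattern_comp_perm (τ.injective.comp S.injective)]
    congr 1
    ext a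
    simp [Perm.viaEmbedding_apply]
  have h := card_mul_card_filter_comp (fun (ρ : ι → Perm (Fin g)) j => (ρ j).viaEmbedding S)
    (fun (τ : ι → Perm (Fin n)) j => pattern (τ j ∘ S))
    (fun τ ρ => funext fun j => hequiv (τ j) (ρ j)) Q
  rwa [Fintype.card_fun, Fintype.card_fun, Fintype.card_perm, Fintype.card_perm,
    Fintype.card_fin, Fintype.card_fin] at h

lemma domCount_pattern {g : ℕ} (S : Fin g ↪ Fin n) (τ : ι → Perm (Fin n)) (a : Fin g) :
    domCount (fun j => pattern (τ j ∘ S)) a = domCountIn (univ.map S) τ (S a) := by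
  rw [domCountIn, filter_map, card_map, domCount, domCountIn]
  congr 1
  ext b
  simp [pattern_lt_pattern_iff ((τ _).injective.comp S.injective)]

lemma factorial_pow_mul_card_domCountIn_lt [DecidableEq ι] (k : ℕ) {g : ℕ} {U : Finset (Fin n)}
    (hU : #U = g) {x : Fin n} (hx : x ∈ U) (a : Fin g) :
    g ! ^ Fintype.card ι * #{τ : ι → Perm (Fin n) | domCountIn U τ x < k}
      = n ! ^ Fintype.card ι * skybandCount k ι a := by
  set S := (U.orderEmbOfFin hU).toEmbedding
  have hS : univ.map S = U := map_orderEmbOfFin_univ U hU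
  obtain ⟨a₀, rfl⟩ : ∃ a₀, S a₀ = x := by
    simpa [← hS] using hx
  rw [skybandCount_eq k a a₀, skybandCount, ← card_mul_card_filter_pattern S]
  simp only [domCount_pattern, hS]

lemma domCount_cons {e : ℕ} [NeZero e] (s : Perm (Fin n)) (τ : Fin e → Perm (Fin n))
    (x : Fin n) :
    domCount (Fin.cons s τ : Fin (e + 1) → Perm (Fin n)) x
      = domCountIn {y | s x ≤ s y} τ x := by
  rw [domCount, domCountIn, domCountIn]
  congr 1
  ext y
  simp only [mem_filter, mem_univ, true_and, Fin.forall_fin_succ, Fin.cons_zero, Fin.cons_succ]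
  refine ⟨fun h => ⟨h.1.le, h.2⟩,
    fun ⟨hle, hτ⟩ => ⟨hle.lt_of_ne fun hxy => ?_, hτ⟩⟩
  rw [s.injective hxy] at hτ
  exact lt_irrefl _ (hτ 0)

lemma card_filter_apply_le (s : Perm (Fin n)) (x : Fin n) :
    #{y | s x ≤ s y} = n - s x := by
  rw [card_equiv s (fun y => by simp) (t := Ici (s x)), Fin.card_Ici]

lemma skybandCount_succ {e : ℕ} (k : ℕ) (x : Fin n) :
    skybandCount k (Fin (e + 1)) x
      = ∑ s : Perm (Fin n), #{τ : Fin e → Perm (Fin n) | domCount (Fin.cons s τ) x < k} := by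
  rw [skybandCount, card_filter,
    ← (Fin.consEquiv fun _ => Perm (Fin n)).sum_comp, Fintype.sum_prod_type]
  simp only [card_filter]
  rfl

lemma A_succ_eq_sum (k : ℕ) {m e : ℕ} [NeZero e] (hm : 0 < m) :
    A k m (e + 1) = ∑ v : Fin m, A k (m - v) e / (m - v : ℕ) := by
  set x : Fin m := ⟨0, hm⟩
  have hterm (s : Perm (Fin m)) :
      (#{τ : Fin e → Perm (Fin m) | domCount (Fin.cons s τ) x < k} : ℝ)
        = m ! ^ e * (A k (m - s x) e / (m - s x : ℕ)) := by
    have hg : 0 < m - s x := by omega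
    have key := factorial_pow_mul_card_domCountIn_lt (ι := Fin e) k
      (card_filter_apply_le s x) (mem_filter.2 ⟨mem_univ x, le_rfl⟩) ⟨0, hg⟩
    simp only [← domCount_cons, Fintype.card_fin] at key
    rw [A_eq_mul_skybandCount k ⟨0, hg⟩]
    field_simp
    rw [mul_comm]
    exact_mod_cast key
  have hperm := card_smul_sum_perm_apply (fun v : Fin m => A k (m - v) e / (m - v : ℕ)) x
  simp only [Fintype.card_fin, nsmul_eq_mul] at hperm
  rw [A_eq_mul_skybandCount k x, skybandCount_succ, Nat.cast_sum,
    sum_congr rfl fun s _ => hterm s, ← mul_sum]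
  field_simp
  rw [mul_right_comm, hperm]
  ring

end Skyband

theorem skyband_recurrence_general (k : ℕ) :
    ∀ d : ℕ, 2 ≤ d → ∀ m : ℕ, 1 ≤ m →
      A k m d = ∑ g ∈ Finset.Icc 1 m, A k g (d - 1) / (g : ℝ) := by
  intro d hd m hm
  obtain ⟨e, rfl⟩ : ∃ e, d = e + 1 := ⟨d - 1, by omega⟩
  have : NeZero e := ⟨by omega⟩
  rw [Skyband.A_succ_eq_sum k hm, Nat.add_sub_cancel,
    Skyband.sum_fin_sub_eq_sum_Icc fun g => A k g e / (g : ℝ)]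

/-- The recurrence for the expected `k`-skyband size:
`A(m, d) = Σ_{g=1}^{m} A(g, d-1) / g` for every `d ≥ 2` and `m ≥ 1`. -/
theorem skyband_recurrence (k : ℕ) (hk : 0 < k) :
    ∀ d : ℕ, 2 ≤ d → ∀ m : ℕ, 1 ≤ m →
      A k m d = ∑ g ∈ Finset.Icc 1 m, A k g (d - 1) / (g : ℝ) :=
  skyband_recurrence_general k
end

section
/- Let k ≥ 0 be a real number and let B be a function assigning a nonnegative real B(m, d) to each pair of positive integers, such that: (i) B(m, 1) ≤ k for all m ≥ 1; (ii) B is nondecreasing in its first argument, i.e., B(m', d) ≤ B(m, d) whenever m' ≤ m; and (iii) B(m, d) ≤ Σ_{g=1}^{m} B(g, d−1)/g for all d ≥ 2 and m ≥ 1. Then B(m, d) ≤ k · (H_m)^{d−1} for all m ≥ 1 and d ≥ 1, where H_m = Σ_{g=1}^{m} 1/g is the m-th harmonic number. -/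
/-- If `B(m, 1) ≤ k`, `B` is nondecreasing in its first argument, and
`B(m, d) ≤ Σ_{g=1}^m B(g, d-1)/g` for `d ≥ 2`, then
`B(m, d) ≤ k · (H_m)^{d-1}` for all `m, d ≥ 1`, where `H_m` is the `m`-th
harmonic number. -/
theorem recurrence_harmonic_bound (k : ℝ) (hk : 0 ≤ k) (B : ℕ → ℕ → ℝ)
    (hB0 : ∀ m d : ℕ, 0 ≤ B m d)
    (hbase : ∀ m : ℕ, 1 ≤ m → B m 1 ≤ k)
    (hmono : ∀ d m' m : ℕ, m' ≤ m → B m' d ≤ B m d)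
    (hrec : ∀ d m : ℕ, 2 ≤ d → 1 ≤ m →
      B m d ≤ ∑ g ∈ Finset.Icc 1 m, B g (d - 1) / (g : ℝ)) :
    ∀ m d : ℕ, 1 ≤ m → 1 ≤ d →
      B m d ≤ k * (∑ g ∈ Finset.Icc 1 m, (1 : ℝ) / (g : ℝ)) ^ (d - 1) := by
  intro m d hm hd
  induction d generalizing m with
  | zero => omega
  | succ n ih =>
    match n with
    | 0 => simpa using hbase m hm
    | Nat.succ p =>
      have Hnonneg : ∀ m : ℕ, (0:ℝ) ≤ ∑ g ∈ Finset.Icc 1 m, (1 : ℝ) / (g : ℝ) := by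
        intro m
        apply Finset.sum_nonneg
        intro g _
        positivity
      have Hmono : ∀ g : ℕ, g ≤ m →
          (∑ i ∈ Finset.Icc 1 g, (1 : ℝ) / (i : ℝ)) ≤ ∑ i ∈ Finset.Icc 1 m, (1 : ℝ) / (i : ℝ) := by
        intro g hg
        apply Finset.sum_le_sum_of_subset_of_nonneg
        · exact Finset.Icc_subset_Icc_right hg
        · intro i _ _; positivity
      calc B m (p + 2) ≤ ∑ g ∈ Finset.Icc 1 m, B g (p + 1) / (g : ℝ) := by
            simpa using hrec (p + 2) m (by omega) hm
        _ ≤ ∑ g ∈ Finset.Icc 1 m,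
              k * (∑ i ∈ Finset.Icc 1 m, (1 : ℝ) / (i : ℝ)) ^ p * (1 / (g : ℝ)) := by
            apply Finset.sum_le_sum
            intro g hg
            simp only [Finset.mem_Icc] at hg
            have hg0 : (0:ℝ) < (g : ℝ) := by exact_mod_cast hg.1
            rw [div_eq_mul_one_div]
            apply mul_le_mul_of_nonneg_right _ (by positivity)
            calc B g (p + 1) ≤ k * (∑ i ∈ Finset.Icc 1 g, (1 : ℝ) / (i : ℝ)) ^ p := by
                  simpa using ih g hg.1 (by omega)
              _ ≤ k * (∑ i ∈ Finset.Icc 1 m, (1 : ℝ) / (i : ℝ)) ^ p := by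
                  apply mul_le_mul_of_nonneg_left _ hk
                  exact pow_le_pow_left₀ (Hnonneg g) (Hmono g hg.2) p
        _ = k * (∑ g ∈ Finset.Icc 1 m, (1 : ℝ) / (g : ℝ)) ^ (p + 2 - 1) := by
            rw [← Finset.mul_sum, show p + 2 - 1 = p + 1 from rfl, pow_succ, mul_assoc]
end

section
/- Let P be a finite set of records with pairwise distinct arrival times and pairwise distinct real scores, let k ≥ 1 and τ ≥ 0, and let p_1 ∈ P be a record with arrival time t_1. Suppose p_1 is not among the top-k of the window [t_1 − τ, t_1], let U be the set of k records of P([t_1 − τ, t_1]) with the highest scores, and let t_2 be the largest arrival time of a record in U. Then no record r ∈ P with t_2 < r.t ≤ t_1 is τ-durable; i.e., every such r fails to be among the top-k of its window [r.t − τ, r.t]. -/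
/-- The records of `P` whose arrival time lies in the window `[a, b]`. -/
noncomputable def window {α : Type*} (P : Finset α) (t : α → ℝ) (a b : ℝ) : Finset α :=
  P.filter (fun q => a ≤ t q ∧ t q ≤ b)

/-- The top-`k` records of the window `[a, b]`: records of the window beaten (in
score) by fewer than `k` records of the window.  With pairwise distinct scores this
is the set of `k` records with the highest scores (all of the window if it has
fewer than `k` records). -/
noncomputable def topk {α : Type*} (k : ℕ) (P : Finset α) (t f : α → ℝ) (a b : ℝ) : Finset α :=
  (window P t a b).filter (fun r =>
    ((window P t a b).filter (fun q => f r < f q)).card < k)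

/-- Time-hopping: if `p₁` is not among the top-`k` of its window `[t p₁ - τ, t p₁]`,
and `p'` is the record with the largest arrival time among that window's top-`k`
set `U`, then no record `r` with `t p' < t r ≤ t p₁` is `τ`-durable. -/
theorem no_durable_between
    {α : Type*} (P : Finset α) (t f : α → ℝ)
    (ht : Set.InjOn t P) (hf : Set.InjOn f P)
    (k : ℕ) (hk : 1 ≤ k) (τ : ℝ) (hτ : 0 ≤ τ)
    (p₁ : α) (hp₁ : p₁ ∈ P)
    (hnd : p₁ ∉ topk k P t f (t p₁ - τ) (t p₁))
    (p' : α) (hp' : p' ∈ topk k P t f (t p₁ - τ) (t p₁))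
    (hmax : ∀ q ∈ topk k P t f (t p₁ - τ) (t p₁), t q ≤ t p') :
    ∀ r ∈ P, t p' < t r → t r ≤ t p₁ →
      r ∉ topk k P t f (t r - τ) (t r) := by
  intro r hr hr1 hr2 hrtop
  have hp'w : p' ∈ window P t (t p₁ - τ) (t p₁) := (Finset.mem_filter.mp hp').1
  have hp't : t p₁ - τ ≤ t p' := ((Finset.mem_filter.mp hp'w).2).1
  set W₁ := window P t (t p₁ - τ) (t p₁) with hW₁
  have hrW₁ : r ∈ W₁ := by
    simp only [hW₁, window, Finset.mem_filter]
    exact ⟨hr, le_trans hp't hr1.le, hr2⟩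
  set M := W₁.filter (fun q => t p' < t q) with hM
  have hrM : r ∈ M := Finset.mem_filter.mpr ⟨hrW₁, hr1⟩
  obtain ⟨m, hmM, hmmax⟩ := M.exists_max_image f ⟨r, hrM⟩
  obtain ⟨hmW₁, hmt⟩ := Finset.mem_filter.mp hmM
  have hmnot : m ∉ topk k P t f (t p₁ - τ) (t p₁) := fun h =>
    absurd (hmax m h) (not_le.mpr hmt)
  have hB : k ≤ (W₁.filter (fun q => f m < f q)).card := by
    by_contra h
    exact hmnot (Finset.mem_filter.mpr ⟨hmW₁, not_le.mp h⟩)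
  have hsub : W₁.filter (fun q => f m < f q) ⊆
      (window P t (t r - τ) (t r)).filter (fun q => f r < f q) := by
    intro q hq
    obtain ⟨hqW₁, hqf⟩ := Finset.mem_filter.mp hq
    obtain ⟨hqP, hq1, hq2⟩ := Finset.mem_filter.mp hqW₁
    have hqt : t q ≤ t p' := by
      by_contra hc
      exact absurd hqf (not_lt.mpr (hmmax q (Finset.mem_filter.mpr ⟨hqW₁, not_le.mp hc⟩)))
    refine Finset.mem_filter.mpr ⟨Finset.mem_filter.mpr ⟨hqP, ?_, ?_⟩, ?_⟩
    · linarith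
    · linarith
    · exact lt_of_le_of_lt (hmmax r hrM) hqf
  have hcard : k ≤ ((window P t (t r - τ) (t r)).filter (fun q => f r < f q)).card :=
    le_trans hB (Finset.card_le_card hsub)
  have := (Finset.mem_filter.mp hrtop).2
  omega
end

section
/- Let P be a finite set of records with pairwise distinct arrival times and pairwise distinct real scores, let k ≥ 1, τ ≥ 0, and fix b with ρ = [b − τ, b]. Let t ∈ ρ, let U = Top_k([t − τ, t]) be the top-k records of the window [t − τ, t], let Z = U ∩ P(ρ), assume Z is nonempty, and let p be the record of Z with the largest arrival time. If p is not among Top_k([p.t − τ, p.t]), then Top_k([p.t − τ, p.t]) ∩ P(ρ) ⊆ Z \ {p}; in particular the new intersection with ρ is a strict subset of Z. -/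
section TopK

variable {α : Type*} {P : Finset α} {t f : α → ℝ} {k : ℕ} {a b : ℝ} {p q : α}

theorem mem_window : q ∈ window P t a b ↔ q ∈ P ∧ a ≤ t q ∧ t q ≤ b :=
  Finset.mem_filter

theorem mem_topk :
    q ∈ topk k P t f a b ↔
      q ∈ window P t a b ∧ ((window P t a b).filter (fun r => f q < f r)).card < k :=
  Finset.mem_filter

theorem mem_topk_of_mem_topk_of_le (hp : p ∈ topk k P t f a b) (hq : q ∈ window P t a b)
    (hpq : f p ≤ f q) : q ∈ topk k P t f a b := by
  rw [mem_topk] at hp ⊢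
  refine ⟨hq, lt_of_le_of_lt (Finset.card_le_card ?_) hp.2⟩
  exact Finset.monotone_filter_right _ fun _ _ => hpq.trans_lt

theorem lt_of_notMem_topk_of_mem_topk (hp : p ∈ window P t a b) (hp' : p ∉ topk k P t f a b)
    (hq : q ∈ topk k P t f a b) : f p < f q := by
  by_contra! hqp
  exact hp' (mem_topk_of_mem_topk_of_le hq hp hqp)

end TopK

theorem z_list_shrinks_general {α : Type*} [DecidableEq α] (P : Finset α) (t f : α → ℝ)
    (k : ℕ) (τ : ℝ) (hτ : 0 ≤ τ)
    (b t₀ : ℝ) (ht₀' : t₀ ≤ b)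
    (p : α)
    (hpZ : p ∈ (topk k P t f (t₀ - τ) t₀).filter (fun q => b - τ ≤ t q ∧ t q ≤ b))
    (hfc : p ∉ topk k P t f (t p - τ) (t p)) :
    ((topk k P t f (t p - τ) (t p)).filter (fun q => b - τ ≤ t q ∧ t q ≤ b))
        ⊆ ((topk k P t f (t₀ - τ) t₀).filter (fun q => b - τ ≤ t q ∧ t q ≤ b)).erase p
    ∧
    ((topk k P t f (t p - τ) (t p)).filter (fun q => b - τ ≤ t q ∧ t q ≤ b))
        ⊂ ((topk k P t f (t₀ - τ) t₀).filter (fun q => b - τ ≤ t q ∧ t q ≤ b)) := by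
  have hp_old : p ∈ topk k P t f (t₀ - τ) t₀ := (Finset.mem_filter.mp hpZ).1
  obtain ⟨hpP, -, hpt₀⟩ := mem_window.mp (mem_topk.mp hp_old).1
  have hp_new : p ∈ window P t (t p - τ) (t p) := mem_window.mpr ⟨hpP, by linarith, le_rfl⟩
  have hsub : ((topk k P t f (t p - τ) (t p)).filter (fun q => b - τ ≤ t q ∧ t q ≤ b))
      ⊆ ((topk k P t f (t₀ - τ) t₀).filter (fun q => b - τ ≤ t q ∧ t q ≤ b)).erase p := by
    intro q hq
    obtain ⟨hq_new, hqρ⟩ := Finset.mem_filter.mp hq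
    obtain ⟨hqP, -, hqtp⟩ := mem_window.mp (mem_topk.mp hq_new).1
    have hpq : f p < f q := lt_of_notMem_topk_of_mem_topk hp_new hfc hq_new
    have hq_old : q ∈ window P t (t₀ - τ) t₀ :=
      mem_window.mpr ⟨hqP, by linarith [hqρ.1], by linarith⟩
    exact Finset.mem_erase.mpr ⟨fun hqp => hpq.ne (congrArg f hqp.symm),
      Finset.mem_filter.mpr ⟨mem_topk_of_mem_topk_of_le hp_old hq_old hpq.le, hqρ⟩⟩
  exact ⟨hsub, hsub.trans_ssubset (Finset.erase_ssubset hpZ)⟩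

/-- Fix `ρ = [b - τ, b]`, a time `t₀ ∈ ρ`, let `Z` be the part of the top-`k` of
the window `[t₀ - τ, t₀]` lying in `ρ`, and let `p` be the record of `Z` with the
largest arrival time.  If `p` is not among the top-`k` of `[t p - τ, t p]`, then
the part of that top-`k` set lying in `ρ` is contained in `Z \ {p}`; in particular
it is a strict subset of `Z`. -/
theorem z_list_shrinks {α : Type*} [DecidableEq α] (P : Finset α) (t f : α → ℝ)
    (ht : Set.InjOn t P) (hf : Set.InjOn f P)
    (k : ℕ) (hk : 1 ≤ k) (τ : ℝ) (hτ : 0 ≤ τ)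
    (b t₀ : ℝ) (ht₀ : b - τ ≤ t₀) (ht₀' : t₀ ≤ b)
    (p : α)
    (hpZ : p ∈ (topk k P t f (t₀ - τ) t₀).filter (fun q => b - τ ≤ t q ∧ t q ≤ b))
    (hmax : ∀ q ∈ (topk k P t f (t₀ - τ) t₀).filter (fun q => b - τ ≤ t q ∧ t q ≤ b),
      t q ≤ t p)
    (hfc : p ∉ topk k P t f (t p - τ) (t p)) :
    ((topk k P t f (t p - τ) (t p)).filter (fun q => b - τ ≤ t q ∧ t q ≤ b))
        ⊆ ((topk k P t f (t₀ - τ) t₀).filter (fun q => b - τ ≤ t q ∧ t q ≤ b)).erase p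
    ∧
    ((topk k P t f (t p - τ) (t p)).filter (fun q => b - τ ≤ t q ∧ t q ≤ b))
        ⊂ ((topk k P t f (t₀ - τ) t₀).filter (fun q => b - τ ≤ t q ∧ t q ≤ b)) :=
  z_list_shrinks_general P t f k τ hτ b t₀ ht₀' p hpZ hfc
end

section
/- Consider n points in ℝ^d whose coordinates are generated by d independent, uniformly random permutations σ_1, …, σ_d of {1, …, n} (point p_i has j-th coordinate σ_j(i)), and let k, τ be positive integers. Then for every fixed index i with τ + 1 ≤ i ≤ n, the probability that fewer than k of the points p_{i−τ}, …, p_{i−1} dominate p_i equals A(τ+1, d)/(τ+1), where A(τ+1, d) is the expected size of the k-skyband of τ+1 points in ℝ^d whose coordinates are generated by d independent, uniformly random permutations of {1, …, τ+1}. -/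
/-! Only the relative order of the coordinates inside the window `p_{i-τ}, …, p_i` matters. The
order pattern of a permutation of `{1, …, n}` on `τ + 1` fixed positions is uniformly distributed:
right multiplication by a permutation supported on the window multiplies the pattern by that
permutation, so all patterns have equally many preimages. The probability is therefore that of the
last of `τ + 1` random points lying in the `k`-skyband, and relabelling the points shows that each
of the `τ + 1` points lies in the skyband with this same probability, so the expected skyband size
is `τ + 1` times it. -/

open Finset Equiv

section OrderPattern

variable {n : ℕ} {α : Type*} [LinearOrder α]

/-- `orderPattern g t` is the rank of `g t` among the values of `g`. -/
def orderPattern (g : Fin n → α) : Perm (Fin n) := (Tuple.sort g)⁻¹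

lemma orderPattern_lt_orderPattern_iff {g : Fin n → α} (hg : g.Injective) (a b : Fin n) :
    orderPattern g a < orderPattern g b ↔ g a < g b := by
  have hsorted : StrictMono (g ∘ Tuple.sort g) :=
    (Tuple.monotone_sort g).strictMono_of_injective (hg.comp (Tuple.sort g).injective)
  obtain ⟨x, rfl⟩ := (Tuple.sort g).surjective a
  obtain ⟨y, rfl⟩ := (Tuple.sort g).surjective b
  simpa [orderPattern] using hsorted.lt_iff_lt.symm

lemma orderPattern_comp_perm {g : Fin n → α} (hg : g.Injective) (π : Perm (Fin n)) :
    orderPattern (g ∘ π) = orderPattern g * π := by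
  have hsort : Tuple.sort (g ∘ π) = π⁻¹ * Tuple.sort g := by
    refine (Tuple.eq_sort_iff.2 ⟨?_, fun i j hij hg' => ?_⟩).symm
    · simpa [Function.comp_def] using Tuple.monotone_sort g
    · simp only [Function.comp_apply, Perm.mul_apply, Perm.coe_inv, apply_symm_apply] at hg'
      exact absurd ((Tuple.sort g).injective (hg hg')) hij.ne
  simp [orderPattern, hsort]

end OrderPattern

section EquivariantCount

variable {α G : Type*} [Fintype α] [Group G] [DecidableEq G]

lemma card_fiber_mul_right (p : α → G) (act : G → Perm α) (hp : ∀ g a, p (act g a) = p a * g)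
    (g h : G) : #{a | p a = g * h} = #{a | p a = g} :=
  (card_equiv (act h) fun a => by simp [hp]).symm

lemma card_filter_comp_mul_card [Fintype G] (p : α → G) (act : G → Perm α)
    (hp : ∀ g a, p (act g a) = p a * g) (Q : G → Prop) [DecidablePred Q] :
    #{a | Q (p a)} * Fintype.card G = Fintype.card α * #{g | Q g} := by
  set c := #{a | p a = 1}
  have hfiber (g : G) : #{a | p a = g} = c := by
    simpa using card_fiber_mul_right p act hp 1 g
  have hQ : #{a | Q (p a)} = #{g | Q g} * c := by
    rw [← sum_const_nat fun g _ => hfiber g, sum_card_fiberwise_eq_card_filter]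
    simp
  have huniv : Fintype.card α = Fintype.card G * c := by
    rw [← card_univ, ← card_univ (α := G), ← sum_const_nat fun g _ => hfiber g,
      sum_card_fiberwise_eq_card_filter]
    simp
  rw [hQ, huniv]
  ring

end EquivariantCount

section Dominance

variable {n d : ℕ}

lemma coordOf_val_add_one (σ : Fin d → Perm (Fin n)) (j : Fin d) (t : Fin n) :
    coordOf σ j (t + 1) = σ j t := by
  simp [coordOf]

lemma dominates_val_add_one_iff (σ : Fin d → Perm (Fin n)) (a b : Fin n) :
    Dominates σ (a + 1) (b + 1) ↔ ∀ j, σ j b < σ j a := by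
  simp only [Dominates, coordOf_val_add_one, Fin.lt_def]

lemma not_dominates_self (hd : 0 < d) (σ : Fin d → Perm (Fin n)) (a : ℕ) :
    ¬ Dominates σ a a :=
  fun h => lt_irrefl _ (h ⟨0, hd⟩)

lemma dominates_mul_perm_iff {m : ℕ} (β : Fin d → Perm (Fin m)) (π : Perm (Fin m)) (a b : Fin m) :
    Dominates (fun j => β j * π) (a + 1) (b + 1) ↔ Dominates β (π a + 1) (π b + 1) := by
  simp only [dominates_val_add_one_iff, Perm.mul_apply]

lemma dominates_orderPattern_iff {m : ℕ} (σ : Fin d → Perm (Fin n)) (f : Fin m ↪ Fin n)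
    (a b : Fin m) :
    Dominates (fun j => orderPattern (σ j ∘ f)) (a + 1) (b + 1) ↔
      Dominates σ (f a + 1) (f b + 1) := by
  simp only [dominates_val_add_one_iff,
    orderPattern_lt_orderPattern_iff ((σ _).injective.comp f.injective), Function.comp_apply]

end Dominance

lemma card_filter_orderPattern_mul_card {m n d : ℕ} (f : Fin m ↪ Fin n)
    (Q : (Fin d → Perm (Fin m)) → Prop) [DecidablePred Q] :
    #{σ : Fin d → Perm (Fin n) | Q fun j => orderPattern (σ j ∘ f)}
        * Fintype.card (Fin d → Perm (Fin m))
      = Fintype.card (Fin d → Perm (Fin n)) * #{β | Q β} := by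
  refine card_filter_comp_mul_card _
    (fun β => Equiv.piCongrRight fun j => Equiv.mulRight ((β j).viaEmbedding f)) ?_ Q
  intro β σ
  funext j
  rw [Pi.mul_apply, ← orderPattern_comp_perm ((σ j).injective.comp f.injective)]
  congr 1
  funext t
  simp [Perm.viaEmbedding_apply]

lemma card_filter_Icc_eq_card_filter_fin (o m : ℕ) (P : ℕ → Prop) [DecidablePred P] :
    #{a ∈ Icc (o + 1) (o + m) | P a} = #{t : Fin m | P (o + t + 1)} := by
  symm
  refine card_bij (fun t _ => o + t + 1) (fun t ht => ?_) (fun t _ s _ h => ?_) (fun a ha => ?_)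
  · simp only [mem_filter, mem_univ, true_and] at ht
    simp only [mem_filter, mem_Icc]
    exact ⟨⟨by omega, by omega⟩, ht⟩
  · exact Fin.ext (by omega)
  · simp only [mem_filter, mem_Icc] at ha
    refine ⟨⟨a - o - 1, by omega⟩, ?_, by simp only; omega⟩
    simp only [mem_filter, mem_univ, true_and]
    convert ha.2 using 2
    omega

section Skyband

variable {m d k : ℕ}

lemma card_filter_card_dominators_lt_perm (π : Perm (Fin m)) (t : Fin m) :
    #{β : Fin d → Perm (Fin m) | #{s : Fin m | Dominates β (s + 1) (π t + 1)} < k}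
      = #{β : Fin d → Perm (Fin m) | #{s : Fin m | Dominates β (s + 1) (t + 1)} < k} := by
  refine card_equiv (Equiv.piCongrRight fun _ => Equiv.mulRight π) fun β => ?_
  have hrelabel : #{s : Fin m | Dominates (fun j => β j * π) (s + 1) (t + 1)}
      = #{s : Fin m | Dominates β (s + 1) (π t + 1)} :=
    card_equiv π fun s => by simp [dominates_mul_perm_iff]
  simp only [mem_filter, mem_univ, true_and, ← hrelabel]
  rfl

lemma skybandSize_eq_card_fin (β : Fin d → Perm (Fin m)) :
    skybandSize k β = #{t : Fin m | #{s : Fin m | Dominates β (s + 1) (t + 1)} < k} := by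
  have hIcc (P : ℕ → Prop) [DecidablePred P] : #{a ∈ Icc 1 m | P a} = #{t : Fin m | P (t + 1)} := by
    simpa using card_filter_Icc_eq_card_filter_fin 0 m P
  simp only [skybandSize, hIcc]

lemma sum_skybandSize :
    ∑ β : Fin d → Perm (Fin (m + 1)), skybandSize k β
      = (m + 1) * #{β : Fin d → Perm (Fin (m + 1)) |
          #{s : Fin (m + 1) | Dominates β (s + 1) (m + 1)} < k} := by
  calc ∑ β : Fin d → Perm (Fin (m + 1)), skybandSize k β
      = ∑ t : Fin (m + 1), #{β : Fin d → Perm (Fin (m + 1)) |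
          #{s : Fin (m + 1) | Dominates β (s + 1) (t + 1)} < k} := by
        simp only [skybandSize_eq_card_fin, card_filter]
        exact sum_comm
    _ = ∑ _t : Fin (m + 1), #{β : Fin d → Perm (Fin (m + 1)) |
          #{s : Fin (m + 1) | Dominates β (s + 1) (Fin.last m + 1)} < k} :=
        sum_congr rfl fun t _ => by
          simpa using card_filter_card_dominators_lt_perm (swap (Fin.last m) t) (Fin.last m)
    _ = _ := by simp

end Skyband

def windowEmb {m n : ℕ} (o : ℕ) (h : o + m ≤ n) : Fin m ↪ Fin n :=
  (Fin.natAddEmb o).trans (Fin.castLEEmb h)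

lemma card_dominators_window {n d : ℕ} (hd : 0 < d) (σ : Fin d → Perm (Fin n)) {o m : ℕ}
    (h : o + (m + 1) ≤ n) :
    #{a ∈ Icc (o + 1) (o + m) | Dominates σ a (o + m + 1)}
      = #{t : Fin (m + 1) |
          Dominates (fun j => orderPattern (σ j ∘ windowEmb o h)) (t + 1) (m + 1)} := by
  have hself : #{a ∈ Icc (o + 1) (o + m) | Dominates σ a (o + m + 1)}
      = #{a ∈ Icc (o + 1) (o + (m + 1)) | Dominates σ a (o + m + 1)} := by
    rw [← add_assoc, ← insert_Icc_right_eq_Icc_add_one (by omega), filter_insert,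
      if_neg (not_dominates_self hd σ _)]
  rw [hself, card_filter_Icc_eq_card_filter_fin]
  refine congrArg card (filter_congr fun t _ => ?_)
  simpa [windowEmb, add_right_comm] using
    (dominates_orderPattern_iff σ (windowEmb o h) t (Fin.last m)).symm

theorem prob_durable_skyband_general (n d k τ : ℕ)
    (hd : 0 < d)
    (i : ℕ) (hi1 : τ + 1 ≤ i) (hi2 : i ≤ n) :
    ((Finset.univ.filter (fun σ : Fin d → Equiv.Perm (Fin n) =>
        ((Finset.Icc (i - τ) (i - 1)).filter (fun a => Dominates σ a i)).card < k)).card : ℝ)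
      / (Fintype.card (Fin d → Equiv.Perm (Fin n)) : ℝ)
    = A k (τ + 1) d / ((τ : ℝ) + 1) := by
  obtain ⟨o, rfl⟩ : ∃ o, i = o + τ + 1 := ⟨i - (τ + 1), by omega⟩
  have h : o + (τ + 1) ≤ n := by omega
  let Q (β : Fin d → Perm (Fin (τ + 1))) : Prop :=
    #{t : Fin (τ + 1) | Dominates β (t + 1) (τ + 1)} < k
  have hwindow : #{σ : Fin d → Perm (Fin n) |
        #{a ∈ Icc (o + τ + 1 - τ) (o + τ + 1 - 1) | Dominates σ a (o + τ + 1)} < k}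
      = #{σ : Fin d → Perm (Fin n) |
        Q fun j => orderPattern (σ j ∘ windowEmb o h)} := by
    rw [show o + τ + 1 - τ = o + 1 by omega, show o + τ + 1 - 1 = o + τ by omega]
    simp only [card_dominators_window hd _ h, Q]
  have hpattern := card_filter_orderPattern_mul_card (windowEmb o h) Q
  have hA : A k (τ + 1) d
      = (τ + 1) * #{β | Q β} / Fintype.card (Fin d → Perm (Fin (τ + 1))) := by
    rw [A, ← Nat.cast_sum, sum_skybandSize]
    push_cast
    rfl
  rw [hwindow, hA]
  field_simp
  exact_mod_cast hpattern

/-- For a fixed index `τ + 1 ≤ i ≤ n`, the probability that fewer than `k` of the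
points `p_{i-τ}, …, p_{i-1}` dominate `p_i` equals `A(τ+1, d) / (τ+1)`. -/
theorem prob_durable_skyband (n d k τ : ℕ)
    (hn : 0 < n) (hd : 0 < d) (hk : 0 < k) (hτ : 0 < τ)
    (i : ℕ) (hi1 : τ + 1 ≤ i) (hi2 : i ≤ n) :
    ((Finset.univ.filter (fun σ : Fin d → Equiv.Perm (Fin n) =>
        ((Finset.Icc (i - τ) (i - 1)).filter (fun a => Dominates σ a i)).card < k)).card : ℝ)
      / (Fintype.card (Fin d → Equiv.Perm (Fin n)) : ℝ)
    = A k (τ + 1) d / ((τ : ℝ) + 1) :=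
  prob_durable_skyband_general n d k τ hd i hi1 hi2
end
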